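/- For every nonnegative integer n, ∑_{k=0}^{2n} k·S(n,k) = n·(3^{n+1} - 1)/2. -/

import Mathlib

open Finset

/-- Trinomial coefficient: coefficient of x^i in (1+x+x^2)^n, zero for i<0 (and automatically zero for i>2n). -/
def T (n : ℕ) (i : ℤ) : ℕ :=
  if 0 ≤ i then ∑ j ∈ Finset.range (i.toNat + 1), n.choose j * j.choose (i.toNat - j) else 0

/-- Partial sum trinomial coefficient. -/
def S (n : ℕ) (k : ℤ) : ℕ :=
  ∑ j ∈ Finset.range (n + 1), T (n - j) (k - j)

/-! `S n` is the coefficient sequence of `Q = ∑_{j ≤ n} X^j (1 + X + X^2)^(n-j)`, a polynomial of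
degree at most `2n`, so the weighted sum is `Q'(1)`. Each summand contributes
`j 3^(n-j) + (n-j) 3^(n-j) = n 3^(n-j)`, and the geometric sum gives `n (3^(n+1) - 1) / 2`. -/

open Polynomial

theorem Polynomial.sum_range_coeff_mul_eq_eval_one_derivative {R : Type*} [Semiring R]
    (p : R[X]) {N : ℕ} (hN : p.natDegree < N) :
    ∑ i ∈ range N, p.coeff i * i = (derivative p).eval 1 := by
  simp only [derivative_eval, one_pow, mul_one]
  exact (sum_over_range' p (f := fun n a => a * n) (fun _ => zero_mul _) N hN).symm

/-- `1 + X + X^2 = X (1 + X) + 1`, expanded by the binomial theorem. -/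
theorem coeff_trinomial_pow (m i : ℕ) :
    ((1 + X + X ^ 2 : ℕ[X]) ^ m).coeff i = ∑ j ∈ range (i + 1), m.choose j * j.choose (i - j) := by
  have hterm : ∀ j, ((X * (1 + X)) ^ j * 1 ^ (m - j) * (m.choose j : ℕ[X])).coeff i
      = m.choose j * if j ≤ i then j.choose (i - j) else 0 := fun j => by
    rw [one_pow, mul_one, ← C_eq_natCast, coeff_mul_C, mul_pow, coeff_X_pow_mul', mul_comm]
    split_ifs <;> simp [coeff_one_add_X_pow]
  rw [show (1 + X + X ^ 2 : ℕ[X]) = X * (1 + X) + 1 by ring, add_pow, finsetSum_coeff]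
  simp only [hterm]
  rw [← sum_subset (range_subset_range.2 (min_le_left (m + 1) (i + 1))),
    ← sum_subset (range_subset_range.2 (min_le_right (m + 1) (i + 1)))]
  · exact sum_congr rfl fun j hj => by rw [if_pos (by simp at hj; omega)]
  · intro j hj hj'
    simp only [mem_range] at hj hj'
    rw [Nat.choose_eq_zero_of_lt (by omega), zero_mul]
  · intro j hj hj'
    simp only [mem_range] at hj hj'
    rw [if_neg (by omega), mul_zero]

theorem T_natCast (m i : ℕ) : T m i = ((1 + X + X ^ 2 : ℕ[X]) ^ m).coeff i := by
  simp [T, coeff_trinomial_pow]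

theorem T_natCast_sub_natCast (m j k : ℕ) :
    T m ((k : ℤ) - j) = (X ^ j * (1 + X + X ^ 2 : ℕ[X]) ^ m).coeff k := by
  rw [coeff_X_pow_mul']
  split_ifs with hjk
  · rw [← T_natCast, Nat.cast_sub hjk]
  · simp [T, hjk]

noncomputable def partialSumPoly (n : ℕ) : ℕ[X] :=
  ∑ j ∈ range (n + 1), X ^ j * (1 + X + X ^ 2) ^ (n - j)

theorem S_natCast (n k : ℕ) : S n k = (partialSumPoly n).coeff k := by
  simp [S, partialSumPoly, T_natCast_sub_natCast]

theorem natDegree_partialSumPoly_le (n : ℕ) : (partialSumPoly n).natDegree ≤ 2 * n := by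
  refine natDegree_sum_le_of_forall_le _ _ fun j hj => ?_
  have hj : j ≤ n := Nat.lt_succ_iff.1 (mem_range.1 hj)
  calc (X ^ j * (1 + X + X ^ 2 : ℕ[X]) ^ (n - j)).natDegree ≤ j + (n - j) * 2 := by
        compute_degree
    _ ≤ 2 * n := by omega

theorem eval_one_trinomial_pow (m : ℕ) : ((1 + X + X ^ 2 : ℕ[X]) ^ m).eval 1 = 3 ^ m := by
  norm_num

theorem eval_one_derivative_trinomial_pow (m : ℕ) :
    (derivative ((1 + X + X ^ 2 : ℕ[X]) ^ m)).eval 1 = m * 3 ^ m := by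
  cases m with
  | zero => simp
  | succ m =>
    have hderiv : (derivative (1 + X + X ^ 2 : ℕ[X])).eval 1 = 3 := by
      norm_num
    rw [derivative_pow, eval_mul, eval_mul, eval_one_trinomial_pow, hderiv, eval_C,
      Nat.cast_id, Nat.add_sub_cancel, mul_assoc, ← pow_succ]

theorem eval_one_derivative_partialSumPoly (n : ℕ) :
    (derivative (partialSumPoly n)).eval 1 = n * ∑ j ∈ range (n + 1), 3 ^ (n - j) := by
  rw [partialSumPoly, derivative_sum, eval_finsetSum, mul_sum]
  refine sum_congr rfl fun j hj => ?_
  have hj : j ≤ n := Nat.lt_succ_iff.1 (mem_range.1 hj)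
  rw [derivative_mul, eval_add, eval_mul, eval_mul, eval_one_trinomial_pow,
    eval_one_derivative_trinomial_pow, derivative_X_pow]
  simp [← add_mul, Nat.add_sub_cancel' hj]

theorem partial_sum_weighted_sum (n : ℕ) :
    ∑ k ∈ Finset.range (2 * n + 1), k * S n k = n * ((3 ^ (n + 1) - 1) / 2) := by
  calc ∑ k ∈ range (2 * n + 1), k * S n k
      = ∑ k ∈ range (2 * n + 1), (partialSumPoly n).coeff k * k := by
        simp only [S_natCast, mul_comm]
    _ = (derivative (partialSumPoly n)).eval 1 :=
        sum_range_coeff_mul_eq_eval_one_derivative _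
          (Nat.lt_succ_of_le (natDegree_partialSumPoly_le n))
    _ = n * ∑ j ∈ range (n + 1), 3 ^ (n - j) := eval_one_derivative_partialSumPoly n
    _ = n * ((3 ^ (n + 1) - 1) / 2) := by
        rw [show 2 = 3 - 1 from rfl, ← Nat.geomSum_eq (by norm_num), ← sum_range_reflect (3 ^ ·)]
        simp
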